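/- arXiv:1407.7942 — 4 statements merged into one kernel-verified Lean document; each statement's English description precedes it below -/
import Mathlib

section
/- Consider the system u̇ = −u(i + g₁(uv)), v̇ = v(i + g₂(uv)), ẇⱼ = wⱼ(λⱼ + gⱼ(uv)) for j = 3,…,n, where g₁, g₂, gⱼ are smooth functions of the single variable uv vanishing at 0. Then J(u,v,w) = w₃ ⋯ wₙ · uv · (g₂(uv) − g₁(uv)) is an inverse Jacobian multiplier of this system. -/
/-!
Write `a = i + g₁`, `b = i + g₂`, `cⱼ = λⱼ + gⱼ`, `W = ∏ wⱼ` and `q(s) = s (b(s) - a(s))`, so that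
`J = W · q(uv)`. The `(u, v)`-part of `X` maps `uv` to `uv (b - a) = q(uv)`, so it contributes
`W q'(uv) q(uv) = J q'(uv)` to `X(J)`, while its divergence is `b - a + uv (b' - a') = q'(uv)`.
Each `wⱼ`-component contributes `cⱼ(uv) J` to `X(J)` and `cⱼ(uv)` to `div X`.
-/
open Finset

variable {𝕜 : Type*} [NontriviallyNormedField 𝕜]

section Calculus

variable {ι : Type*} [Fintype ι]

theorem HasFDerivAt.fderiv_mul_comp_mul_apply {f : (ι → 𝕜) → 𝕜} {f' : (ι → 𝕜) →L[𝕜] 𝕜}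
    {φ : 𝕜 → 𝕜} {x : ι → 𝕜} (a b : ι) (hf : HasFDerivAt f f' x)
    (hφ : DifferentiableAt 𝕜 φ (x a * x b)) (v : ι → 𝕜) :
    fderiv 𝕜 (fun y => f y * φ (y a * y b)) x v
      = f' v * φ (x a * x b) + f x * (deriv φ (x a * x b) * (x a * v b + x b * v a)) := by
  have hs : HasFDerivAt (fun y : ι → 𝕜 => y a * y b) _ x :=
    (hasFDerivAt_apply (𝕜 := 𝕜) a x).fun_mul (hasFDerivAt_apply (𝕜 := 𝕜) b x)
  have h : HasFDerivAt (fun y => f y * φ (y a * y b)) _ x :=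
    hf.fun_mul (hφ.hasDerivAt.comp_hasFDerivAt x hs)
  rw [h.fderiv]
  simp only [smul_add, add_apply, smul_apply, ContinuousLinearMap.proj_apply, smul_eq_mul]
  ring

variable [DecidableEq ι]

theorem hasFDerivAt_finsetProd_apply (S : Finset ι) (x : ι → 𝕜) :
    HasFDerivAt (fun y : ι → 𝕜 => ∏ j ∈ S, y j)
      (∑ i ∈ S, (∏ j ∈ S.erase i, x j) • ContinuousLinearMap.proj (R := 𝕜) (φ := fun _ => 𝕜) i) x :=
  HasFDerivAt.finsetProd fun j _ => hasFDerivAt_apply j x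

noncomputable def divergence (X : (ι → 𝕜) → ι → 𝕜) (x : ι → 𝕜) : 𝕜 :=
  ∑ i, fderiv 𝕜 (fun y => X y i) x (Pi.single i 1)

def IsInverseJacobianMultiplier (X : (ι → 𝕜) → ι → 𝕜) (J : (ι → 𝕜) → 𝕜) : Prop :=
  ∀ x, ∑ i, X x i * fderiv 𝕜 J x (Pi.single i 1) = J x * divergence X x

end Calculus

theorem Fin.sum_univ_eq_add_add_sum_filter_two_le {M : Type*} [AddCommMonoid M] {m : ℕ}
    (f : Fin (m + 2) → M) :
    ∑ i, f i = f 0 + f 1 + ∑ i ∈ univ.filter (fun i : Fin (m + 2) => 2 ≤ (i : ℕ)), f i := by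
  have h : univ.filter (fun i : Fin (m + 2) => ¬2 ≤ (i : ℕ)) = {0, 1} := by
    ext i
    simp only [mem_filter, mem_univ, true_and, mem_insert, mem_singleton, Fin.ext_iff,
      Fin.val_zero, Fin.val_one]
    omega
  rw [← sum_filter_add_sum_filter_not univ (fun i : Fin (m + 2) => 2 ≤ (i : ℕ)), add_comm, h,
    sum_pair (by simp)]

namespace NormalForm

variable {m : ℕ}

abbrev wCoords (m : ℕ) : Finset (Fin (m + 2)) := univ.filter (fun i : Fin (m + 2) => 2 ≤ (i : ℕ))

-- Coordinates: `x 0 = u`, `x 1 = v` and `x j = wⱼ` for `j ∈ wCoords m`.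
def field (a b : 𝕜 → 𝕜) (c : Fin (m + 2) → 𝕜 → 𝕜) (x : Fin (m + 2) → 𝕜) (i : Fin (m + 2)) : 𝕜 :=
  if (i : ℕ) = 0 then -x i * a (x 0 * x 1)
  else if (i : ℕ) = 1 then x i * b (x 0 * x 1)
  else x i * c i (x 0 * x 1)

def multiplier (a b : 𝕜 → 𝕜) (x : Fin (m + 2) → 𝕜) : 𝕜 :=
  (∏ i ∈ wCoords m, x i) * (x 0 * x 1) * (b (x 0 * x 1) - a (x 0 * x 1))

theorem zero_notMem_wCoords : (0 : Fin (m + 2)) ∉ wCoords m := by simp [wCoords]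

theorem one_notMem_wCoords : (1 : Fin (m + 2)) ∉ wCoords m := by simp [wCoords]

variable {a b : 𝕜 → 𝕜} {c : Fin (m + 2) → 𝕜 → 𝕜}

theorem field_zero : (fun y => field a b c y 0) = fun y => -y 0 * a (y 0 * y 1) := by
  simp [field]

theorem field_one : (fun y => field a b c y 1) = fun y => y 1 * b (y 0 * y 1) := by
  simp [field]

theorem field_of_mem_wCoords {i : Fin (m + 2)} (hi : i ∈ wCoords m) :
    (fun y => field a b c y i) = fun y => y i * c i (y 0 * y 1) := by
  have : 2 ≤ (i : ℕ) := (mem_filter.mp hi).2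
  funext y
  rw [field, if_neg (by omega), if_neg (by omega)]

theorem divergence_field (ha : Differentiable 𝕜 a) (hb : Differentiable 𝕜 b)
    (hc : ∀ i, Differentiable 𝕜 (c i)) (x : Fin (m + 2) → 𝕜) :
    divergence (field a b c) x = b (x 0 * x 1) - a (x 0 * x 1)
      + x 0 * x 1 * (deriv b (x 0 * x 1) - deriv a (x 0 * x 1))
      + ∑ i ∈ wCoords m, c i (x 0 * x 1) := by
  have h10 : (1 : Fin (m + 2)) ≠ 0 := by simp
  have div_w : ∀ i ∈ wCoords m,
      fderiv 𝕜 (fun y => field a b c y i) x (Pi.single i 1) = c i (x 0 * x 1) := by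
    intro i hi
    rw [field_of_mem_wCoords hi,
      (hasFDerivAt_apply (𝕜 := 𝕜) i x).fderiv_mul_comp_mul_apply 0 1 (hc i _)]
    simp [ne_of_mem_of_not_mem hi zero_notMem_wCoords, ne_of_mem_of_not_mem hi one_notMem_wCoords]
  rw [divergence, Fin.sum_univ_eq_add_add_sum_filter_two_le, field_zero, field_one,
    (hasFDerivAt_apply (𝕜 := 𝕜) 0 x).fun_neg.fderiv_mul_comp_mul_apply 0 1 (ha _),
    (hasFDerivAt_apply (𝕜 := 𝕜) 1 x).fderiv_mul_comp_mul_apply 0 1 (hb _),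
    sum_congr rfl div_w]
  simp only [neg_apply, ContinuousLinearMap.proj_apply, Pi.single_eq_same, neg_mul, one_mul, ne_eq,
    h10, not_false_eq_true, Pi.single_eq_of_ne, mul_zero, mul_one, zero_add, zero_ne_one, add_zero,
    add_left_inj]
  ring

theorem sum_field_mul_fderiv_multiplier (ha : Differentiable 𝕜 a) (hb : Differentiable 𝕜 b)
    (x : Fin (m + 2) → 𝕜) :
    ∑ i, field a b c x i * fderiv 𝕜 (multiplier a b) x (Pi.single i 1)
      = multiplier a b x * (b (x 0 * x 1) - a (x 0 * x 1)
        + x 0 * x 1 * (deriv b (x 0 * x 1) - deriv a (x 0 * x 1))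
        + ∑ i ∈ wCoords m, c i (x 0 * x 1)) := by
  set s := x 0 * x 1
  set q : 𝕜 → 𝕜 := fun t => t * (b t - a t)
  have hq : HasDerivAt q (1 * (b s - a s) + s * (deriv b s - deriv a s)) s :=
    (hasDerivAt_id' s).mul ((hb s).hasDerivAt.fun_sub (ha s).hasDerivAt)
  have hJ : multiplier a b = fun y => (∏ i ∈ wCoords m, y i) * q (y 0 * y 1) :=
    funext fun y => mul_assoc _ _ _
  have dJ (i) := (hasFDerivAt_finsetProd_apply (wCoords m) x).fderiv_mul_comp_mul_apply 0 1
    hq.differentiableAt (Pi.single i 1)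
  rw [← hJ, hq.deriv] at dJ
  simp only [_root_.sum_apply, smul_apply, ContinuousLinearMap.proj_apply, Pi.single_apply,
    smul_eq_mul, mul_ite, mul_one, mul_zero, sum_ite_eq', ite_mul, zero_mul, one_mul] at dJ
  have lie_w : ∀ i ∈ wCoords m,
      field a b c x i * fderiv 𝕜 (multiplier a b) x (Pi.single i 1) = c i s * multiplier a b x := by
    intro i hi
    rw [congrFun (field_of_mem_wCoords hi) x, dJ, if_pos hi,
      if_neg (ne_of_mem_of_not_mem hi one_notMem_wCoords).symm,
      if_neg (ne_of_mem_of_not_mem hi zero_notMem_wCoords).symm, congrFun hJ x,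
      ← mul_prod_erase _ _ hi]
    ring
  have h10 : (1 : Fin (m + 2)) ≠ 0 := by simp
  rw [Fin.sum_univ_eq_add_add_sum_filter_two_le, sum_congr rfl lie_w, ← sum_mul, dJ, dJ,
    if_neg zero_notMem_wCoords, if_neg one_notMem_wCoords, if_neg h10, if_neg h10.symm,
    if_pos rfl, if_pos rfl, congrFun field_zero x, congrFun field_one x, congrFun hJ x]
  ring

theorem isInverseJacobianMultiplier_multiplier (ha : Differentiable 𝕜 a)
    (hb : Differentiable 𝕜 b) (hc : ∀ i, Differentiable 𝕜 (c i)) :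
    IsInverseJacobianMultiplier (field a b c) (multiplier a b) := fun x => by
  rw [sum_field_mul_fderiv_multiplier ha hb, divergence_field ha hb hc]

end NormalForm

theorem stmt4_general (m : ℕ) (lam : Fin (m + 2) → ℂ) (g₁ g₂ : ℂ → ℂ) (gj : Fin (m + 2) → ℂ → ℂ)
    (hg₁ : ContDiff ℂ ⊤ g₁)
    (hg₂ : ContDiff ℂ ⊤ g₂)
    (hgj : ∀ j, ContDiff ℂ ⊤ (gj j))
    (F : (Fin (m + 2) → ℂ) → (Fin (m + 2) → ℂ))
    (hF : ∀ x i, F x i =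
      if (i : ℕ) = 0 then -(x i) * (Complex.I + g₁ (x 0 * x 1))
      else if (i : ℕ) = 1 then x i * (Complex.I + g₂ (x 0 * x 1))
      else x i * (lam i + gj i (x 0 * x 1)))
    (J : (Fin (m + 2) → ℂ) → ℂ)
    (hJ : ∀ x, J x = (∏ i ∈ Finset.univ.filter (fun i : Fin (m + 2) => 2 ≤ (i : ℕ)), x i)
      * (x 0 * x 1) * (g₂ (x 0 * x 1) - g₁ (x 0 * x 1))) :
    ∀ x, ∑ i, F x i * fderiv ℂ J x (Pi.single i 1)
      = J x * ∑ i, fderiv ℂ (fun y => F y i) x (Pi.single i 1) := by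
  set a : ℂ → ℂ := fun t => Complex.I + g₁ t
  set b : ℂ → ℂ := fun t => Complex.I + g₂ t
  obtain rfl : F = NormalForm.field a b (fun i t => lam i + gj i t) := funext₂ hF
  obtain rfl : J = NormalForm.multiplier a b :=
    funext fun x => by rw [hJ, NormalForm.multiplier]; ring
  exact NormalForm.isInverseJacobianMultiplier_multiplier
    ((hg₁.differentiable (by simp)).const_add _) ((hg₂.differentiable (by simp)).const_add _)
    fun i => ((hgj i).differentiable (by simp)).const_add _

/-- For the normal form system `u̇ = -u(i+g₁(uv))`, `v̇ = v(i+g₂(uv))`,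
`ẇⱼ = wⱼ(λⱼ+gⱼ(uv))`, the function `J = w₃⋯wₙ · uv · (g₂(uv) - g₁(uv))` is an inverse
Jacobian multiplier. Coordinates: `x 0 = u`, `x 1 = v`, `x i = wᵢ` for `i ≥ 2`. -/
theorem stmt4 (m : ℕ) (lam : Fin (m + 2) → ℂ) (g₁ g₂ : ℂ → ℂ) (gj : Fin (m + 2) → ℂ → ℂ)
    (hg₁ : ContDiff ℂ ⊤ g₁) (hg₁0 : g₁ 0 = 0)
    (hg₂ : ContDiff ℂ ⊤ g₂) (hg₂0 : g₂ 0 = 0)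
    (hgj : ∀ j, ContDiff ℂ ⊤ (gj j)) (hgj0 : ∀ j, gj j 0 = 0)
    (F : (Fin (m + 2) → ℂ) → (Fin (m + 2) → ℂ))
    (hF : ∀ x i, F x i =
      if (i : ℕ) = 0 then -(x i) * (Complex.I + g₁ (x 0 * x 1))
      else if (i : ℕ) = 1 then x i * (Complex.I + g₂ (x 0 * x 1))
      else x i * (lam i + gj i (x 0 * x 1)))
    (J : (Fin (m + 2) → ℂ) → ℂ)
    (hJ : ∀ x, J x = (∏ i ∈ Finset.univ.filter (fun i : Fin (m + 2) => 2 ≤ (i : ℕ)), x i)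
      * (x 0 * x 1) * (g₂ (x 0 * x 1) - g₁ (x 0 * x 1))) :
    ∀ x, ∑ i, F x i * fderiv ℂ J x (Pi.single i 1)
      = J x * ∑ i, fderiv ℂ (fun y => F y i) x (Pi.single i 1) :=
  stmt4_general m lam g₁ g₂ gj hg₁ hg₂ hgj F hF J hJ
end

section
/- Let J be a smooth inverse Jacobian multiplier of a smooth vector field X on ℝⁿ, and suppose x₀ lies on a periodic orbit of period T₀ > 0 such that ∫₀^{T₀} (div X)(φ_s(x₀)) ds ≠ 0. Then J(x₀) = 0. -/
private lemma clm_apply_eq_sum {n : ℕ} (L : (Fin n → ℝ) →L[ℝ] ℝ) (v : Fin n → ℝ) :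
    L v = ∑ j, v j * L (Pi.single j 1) := by
  have hv : v = ∑ j, v j • (Pi.single j (1:ℝ) : Fin n → ℝ) := by
    ext i; simp [Pi.single_apply, Finset.sum_apply, eq_comm]
  conv_lhs => rw [hv]
  simp [smul_eq_mul]

/-- If `x₀` lies on a periodic orbit of period `T₀ > 0` of `X` along which the integral of
the divergence is nonzero, then any inverse Jacobian multiplier `J` vanishes at `x₀`. -/
theorem stmt7 (n : ℕ) (X : (Fin n → ℝ) → (Fin n → ℝ)) (J : (Fin n → ℝ) → ℝ)
    (hX : ContDiff ℝ (⊤ : ℕ∞) X) (hJ : ContDiff ℝ (⊤ : ℕ∞) J)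
    (hIJM : ∀ x, ∑ j, X x j * fderiv ℝ J x (Pi.single j 1)
      = J x * ∑ j, fderiv ℝ (fun y => X y j) x (Pi.single j 1))
    (x₀ : Fin n → ℝ) (φ : ℝ → (Fin n → ℝ)) (hφ0 : φ 0 = x₀)
    (hφ : ∀ t, HasDerivAt φ (X (φ t)) t)
    (T₀ : ℝ) (hT₀ : 0 < T₀) (hper : φ T₀ = x₀)
    (hint : (∫ s in (0 : ℝ)..T₀,
      ∑ j, fderiv ℝ (fun y => X y j) (φ s) (Pi.single j 1)) ≠ 0) :
    J x₀ = 0 := by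
  set D : ℝ → ℝ := fun t => ∑ j, fderiv ℝ (fun y => X y j) (φ t) (Pi.single j 1) with hDdef
  have hφc : Continuous φ := Differentiable.continuous (fun t => (hφ t).differentiableAt)
  have hDc : Continuous D := by
    apply continuous_finset_sum
    intro j _
    have hXj : ContDiff ℝ (⊤ : ℕ∞) (fun y => X y j) :=
      (ContinuousLinearMap.proj j : (Fin n → ℝ) →L[ℝ] ℝ).contDiff.comp hX
    have h1 : Continuous (fun x => fderiv ℝ (fun y => X y j) x) :=
      (hXj.fderiv_right (m := (⊤ : ℕ∞)) (by simp)).continuous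
    exact (ContinuousLinearMap.apply ℝ ℝ (Pi.single j (1:ℝ))).continuous.comp (h1.comp hφc)
  set I : ℝ → ℝ := fun t => ∫ s in (0:ℝ)..t, D s with hIdef
  have hI : ∀ t, HasDerivAt I (D t) t := fun t =>
    (hDc.integral_hasStrictDerivAt 0 t).hasDerivAt
  set F : ℝ → ℝ := fun t => J (φ t) * Real.exp (-(I t)) with hFdef
  have hF : ∀ t, HasDerivAt F 0 t := by
    intro t
    have hg : HasDerivAt (fun t => J (φ t)) ((fderiv ℝ J (φ t)) (X (φ t))) t :=
      (hJ.differentiable (by simp) (φ t)).hasFDerivAt.comp_hasDerivAt t (hφ t)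
    have hgval : (fderiv ℝ J (φ t)) (X (φ t)) = J (φ t) * D t := by
      rw [clm_apply_eq_sum, hIJM (φ t)]
    rw [hgval] at hg
    have he : HasDerivAt (fun t => Real.exp (-(I t))) (Real.exp (-(I t)) * -(D t)) t :=
      ((hI t).neg).exp
    have this : HasDerivAt (fun t => J (φ t) * Real.exp (-(I t)))
        (J (φ t) * D t * Real.exp (-I t) + J (φ t) * (Real.exp (-I t) * -D t)) t := hg.mul he
    convert this using 1
    ring
  have hconst : F T₀ = F 0 :=
    is_const_of_deriv_eq_zero (fun t => (hF t).differentiableAt)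
      (fun t => (hF t).deriv) T₀ 0
  have hF0 : F 0 = J x₀ := by
    simp [hFdef, hIdef, hφ0]
  have hFT : F T₀ = J x₀ * Real.exp (-(I T₀)) := by simp [hFdef, hper]
  have hc : Real.exp (-(I T₀)) ≠ 1 := by
    intro h
    rw [Real.exp_eq_one_iff, neg_eq_zero] at h
    exact hint h
  rw [hFT, hF0] at hconst
  have : J x₀ * (Real.exp (-(I T₀)) - 1) = 0 := by ring_nf; linarith [hconst]
  rcases mul_eq_zero.1 this with h | h
  · exact h
  · exact absurd (by linarith : Real.exp (-(I T₀)) = 1) hc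
end

section
/- Let X be a smooth vector field on ℝⁿ with flow φ_t, and J an inverse Jacobian multiplier of X. Let P(x) = φ_T(x) denote the time-T map. Then J(P(x)) = J(x) · det DP(x), where DP is the Jacobian matrix of P with respect to x. -/
open Set Filter Metric Real Topology

section helpers

variable {E : Type*} [NormedAddCommGroup E] [NormedSpace ℝ E]

/-- Convert a derivative within `Icc a b` at an interior-from-the-right point to a
derivative within `Ici t`. -/
lemma hasDerivWithinAt_Ici_of_Icc {u : ℝ → E} {d : E} {a b t : ℝ} (ht : t ∈ Ico a b)
    (h : HasDerivWithinAt u d (Icc a b) t) : HasDerivWithinAt u d (Ici t) t := by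
  have h1 : HasDerivWithinAt u d (Icc t b) t := h.mono (Icc_subset_Icc ht.1 le_rfl)
  have h2 : Icc t b =ᶠ[𝓝 t] Ici t := by
    filter_upwards [Iio_mem_nhds ht.2] with y hy
    simp only [mem_Icc, mem_Ici, eq_iff_iff]
    exact ⟨fun h => h.1, fun h => ⟨h, le_of_lt hy⟩⟩
  exact (hasDerivWithinAt_congr_set h2).1 h1

lemma gronwallBound_zero_smul (K e x : ℝ) :
    gronwallBound 0 K e x = e * gronwallBound 0 K 1 x := by
  rcases eq_or_ne K 0 with h | h
  · simp [h, gronwallBound_K0]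
  · simp only [gronwallBound_of_K_ne_0 h]
    ring

lemma gronwallBound_zero_nonneg {K x : ℝ} (hK : 0 ≤ K) (hx : 0 ≤ x) :
    0 ≤ gronwallBound 0 K 1 x := by
  rcases eq_or_ne K 0 with h | h
  · simp [h, gronwallBound_K0, hx]
  · rw [gronwallBound_of_K_ne_0 h]
    have hK' : 0 < K := lt_of_le_of_ne hK (Ne.symm h)
    have : (1 : ℝ) ≤ exp (K * x) := by
      rw [← exp_zero]
      exact exp_le_exp.2 (by positivity)
    simp only [zero_mul, zero_add]
    have h2 : 0 ≤ exp (K * x) - 1 := by linarith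
    positivity

/-- Uniform linearization of a `C¹` map on a compact set. -/
lemma uniform_linearization [ProperSpace E] {F : Type*} [NormedAddCommGroup F]
    [NormedSpace ℝ F] {f : E → F} (hf : ContDiff ℝ (⊤ : ℕ∞) f) {s : Set E} (hs : IsCompact s)
    {ε : ℝ} (hε : 0 < ε) :
    ∃ δ > 0, ∀ a ∈ s, ∀ b, ‖b - a‖ ≤ δ →
      ‖f b - f a - fderiv ℝ f a (b - a)‖ ≤ ε * ‖b - a‖ := by
  have hfd : ∀ y, HasFDerivAt f (fderiv ℝ f y) y := fun y =>
    (hf.differentiable (by simp) y).hasFDerivAt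
  have hDc : Continuous fun y => fderiv ℝ f y := hf.continuous_fderiv (by simp)
  set s' : Set E := cthickening 1 s with hs'def
  have hs' : IsCompact s' := hs.cthickening
  have huc : UniformContinuousOn (fun y => fderiv ℝ f y) s' :=
    hs'.uniformContinuousOn_of_continuous hDc.continuousOn
  rw [Metric.uniformContinuousOn_iff] at huc
  obtain ⟨δ', hδ', hu⟩ := huc ε hε
  refine ⟨min (δ' / 2) 1, by positivity, fun a ha b hb => ?_⟩
  have hmem : ∀ y ∈ closedBall a (min (δ' / 2) 1), y ∈ s' := by
    intro y hy
    exact mem_cthickening_of_dist_le y a 1 s ha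
      (le_trans (mem_closedBall.1 hy) (min_le_right _ _))
  have hbound : ∀ y ∈ closedBall a (min (δ' / 2) 1),
      ‖fderiv ℝ f y - fderiv ℝ f a‖ ≤ ε := by
    intro y hy
    have hya : dist y a < δ' := lt_of_le_of_lt
      (le_trans (mem_closedBall.1 hy) (min_le_left _ _)) (by linarith)
    have := hu y (hmem y hy) a (mem_cthickening_of_dist_le a a 1 s ha (by simp)) hya
    rw [dist_eq_norm] at this
    exact le_of_lt this
  have hderiv : ∀ y ∈ closedBall a (min (δ' / 2) 1),
      HasFDerivWithinAt (fun z => f z - fderiv ℝ f a z)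
        (fderiv ℝ f y - fderiv ℝ f a) (closedBall a (min (δ' / 2) 1)) y := by
    intro y _
    exact ((hfd y).sub ((fderiv ℝ f a).hasFDerivAt)).hasFDerivWithinAt
  have hba : b ∈ closedBall a (min (δ' / 2) 1) := by
    rw [mem_closedBall, dist_eq_norm]; exact hb
  have haa : a ∈ closedBall a (min (δ' / 2) 1) := mem_closedBall_self (by positivity)
  have := (convex_closedBall a (min (δ' / 2) 1)).norm_image_sub_le_of_norm_hasFDerivWithin_le
    hderiv hbound haa hba
  have heq : f b - (fderiv ℝ f a) b - (f a - (fderiv ℝ f a) a)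
      = f b - f a - fderiv ℝ f a (b - a) := by
    rw [map_sub]; abel
  rwa [heq] at this

end helpers

section linode

variable {E : Type*} [NormedAddCommGroup E] [NormedSpace ℝ E] [CompleteSpace E]

/-- A junk-derivative lemma: within a set approaching which the punctured neighborhood filter
is trivial, any derivative works. -/
lemma hasDerivWithinAt_of_nhdsWithin_bot {f : ℝ → E} {s : Set ℝ} {x : ℝ}
    (h : 𝓝[s \ {x}] x = ⊥) (d : E) : HasDerivWithinAt f d s x := by
  have h1 : HasFDerivWithinAt f (ContinuousLinearMap.smulRight (1 : ℝ →L[ℝ] ℝ) d) s x :=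
    HasFDerivWithinAt.of_not_accPt (by
      show ¬ NeBot (𝓝 x ⊓ 𝓟 {x}ᶜ ⊓ 𝓟 s)
      rw [not_neBot, inf_assoc, inf_principal, inter_comm, ← diff_eq]; exact h)
  simpa using h1.hasDerivWithinAt

lemma hasDerivWithinAt_of_nmem_closure' {f : ℝ → E} {s : Set ℝ} {x : ℝ}
    (h : x ∉ closure s) (d : E) : HasDerivWithinAt f d s x := by
  apply hasDerivWithinAt_of_nhdsWithin_bot _ d
  apply eq_bot_mono (nhdsWithin_mono _ diff_subset)
  rwa [mem_closure_iff_nhdsWithin_neBot, not_neBot] at h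

/-- Global existence for a linear (in the state) time-dependent ODE on `[0, b]`. -/
lemma exists_linear_ode_solution (A : ℝ → E →L[ℝ] E) (hA : Continuous A)
    (b : ℝ) (hb : 0 ≤ b) (y₀ : E) :
    ∃ f : ℝ → E, f 0 = y₀ ∧ ∀ t ∈ Icc 0 b, HasDerivWithinAt f (A t (f t)) (Icc 0 b) t := by
  obtain ⟨L₀, hL₀⟩ := (isCompact_Icc (a := (0:ℝ)) (b := b)).exists_bound_of_continuousOn
    (hA.norm.continuousOn)
  set L : ℝ := max L₀ 0 with hLdef
  have hL : 0 ≤ L := le_max_right _ _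
  have hAL : ∀ t ∈ Icc (0:ℝ) b, ‖A t‖ ≤ L := by
    intro t ht
    have h := hL₀ t ht
    rw [norm_norm] at h
    exact h.trans (le_max_left _ _)
  set η : ℝ := 1 / (2 * (L + 1)) with hηdef
  have hη : 0 < η := by positivity
  -- single step of length ≤ η
  have step : ∀ c c' : ℝ, 0 ≤ c → c ≤ c' → c' ≤ b → c' - c ≤ η → ∀ y : E,
      ∃ g : ℝ → E, g c = y ∧ ∀ t ∈ Icc c c', HasDerivWithinAt g (A t (g t)) (Icc c c') t := by
    intro c c' hc hcc' hc'b hstep y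
    have hpl : IsPicardLindelof (fun t z => A t z) (⟨c, ⟨le_rfl, hcc'⟩⟩ : Icc c c') y
        ⟨‖y‖ + 1, by positivity⟩ 0 ⟨L * (2 * ‖y‖ + 1), by positivity⟩ ⟨L, hL⟩ := by
      constructor
      · intro t ht
        have h1 : LipschitzWith ‖A t‖₊ (A t) := (A t).lipschitz
        have h2 : ‖A t‖₊ ≤ (⟨L, hL⟩ : NNReal) := by
          show ‖A t‖ ≤ L
          exact hAL t ⟨hc.trans ht.1, ht.2.trans hc'b⟩
        exact (h1.weaken h2).lipschitzOnWith
      · intro z _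
        exact (hA.clm_apply continuous_const).continuousOn
      · intro t ht z hz
        have h2 : ‖z - y‖ ≤ ‖y‖ + 1 := by
          rw [← dist_eq_norm]; exact mem_closedBall.1 hz
        have h1 : ‖z‖ ≤ 2 * ‖y‖ + 1 := by
          have h3 := norm_sub_norm_le z y
          linarith
        calc ‖A t z‖ ≤ ‖A t‖ * ‖z‖ := (A t).le_opNorm z
          _ ≤ L * (2 * ‖y‖ + 1) :=
              mul_le_mul (hAL t ⟨hc.trans ht.1, ht.2.trans hc'b⟩) h1 (norm_nonneg _) hL
      · show L * (2 * ‖y‖ + 1) * max (c' - c) (c - c) ≤ ‖y‖ + 1 - 0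
        rw [sub_zero]
        have h2 : max (c' - c) (c - c) = c' - c := max_eq_left (by linarith)
        rw [h2]
        have hy0 : (0:ℝ) ≤ ‖y‖ := norm_nonneg _
        have key : L * η ≤ 1 / 2 := by
          rw [hηdef]
          rw [mul_one_div, div_le_div_iff₀ (by positivity) (by norm_num)]
          nlinarith
        have h3 : L * (2 * ‖y‖ + 1) * (c' - c) ≤ L * (2 * ‖y‖ + 1) * η :=
          mul_le_mul_of_nonneg_left hstep (by positivity)
        nlinarith
    obtain ⟨g, hg0, hg⟩ := hpl.exists_eq_forall_mem_Icc_hasDerivWithinAt₀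
    exact ⟨g, hg0, hg⟩
  -- induction over steps
  have main : ∀ k : ℕ, ∃ f : ℝ → E, f 0 = y₀ ∧
      ∀ t ∈ Icc 0 (min (k * η) b), HasDerivWithinAt f (A t (f t)) (Icc 0 (min (k * η) b)) t := by
    intro k
    induction k with
    | zero =>
        refine ⟨fun _ => y₀, rfl, ?_⟩
        intro t ht
        simp only [Nat.cast_zero, zero_mul, min_eq_left hb] at ht ⊢
        rw [Icc_self] at ht ⊢
        rw [mem_singleton_iff] at ht
        subst ht
        apply hasDerivWithinAt_of_nhdsWithin_bot _ _
        simp [nhdsWithin_empty]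
    | succ k ih =>
        obtain ⟨f, hf0, hf⟩ := ih
        rcases le_or_gt b (k * η) with hbk | hbk
        · have he : min ((k:ℝ) * η) b = b := min_eq_right hbk
          have he2 : min (((k:ℕ)+1 : ℕ) * η) b = b := by
            apply min_eq_right
            push_cast
            nlinarith
          refine ⟨f, hf0, ?_⟩
          rw [he2]; rw [he] at hf; exact hf
        · set c : ℝ := (k:ℝ) * η with hcdef
          have hc0 : 0 ≤ c := by positivity
          have he : min c b = c := min_eq_left hbk.le
          rw [he] at hf
          set c' : ℝ := min (((k:ℕ)+1 : ℕ) * η) b with hc'def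
          have hcc' : c ≤ c' := by
            apply le_min _ hbk.le
            push_cast
            nlinarith
          have hc'b : c' ≤ b := min_le_right _ _
          have hstep : c' - c ≤ η := by
            have : c' ≤ ((k:ℕ)+1 : ℕ) * η := min_le_left _ _
            push_cast at this ⊢
            nlinarith
          obtain ⟨g, hgc, hg⟩ := step c c' hc0 hcc' hc'b hstep (f c)
          refine ⟨fun t => if t ≤ c then f t else g t, by simp [hc0, hf0], ?_⟩
          intro t ht
          have hset : Icc (0:ℝ) c' = Icc 0 c ∪ Icc c c' := (Icc_union_Icc_eq_Icc hc0 hcc').symm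
          have hEq1 : ∀ y ∈ Icc (0:ℝ) c, (if y ≤ c then f y else g y) = f y := by
            intro y hy; rw [if_pos hy.2]
          have hEq2 : ∀ y ∈ Icc c c', (if y ≤ c then f y else g y) = g y := by
            intro y hy
            rcases le_or_gt y c with h | h
            · have : y = c := le_antisymm h hy.1
              rw [if_pos h, this, hgc]
            · rw [if_neg (not_le.2 h)]
          have hval : A t (if t ≤ c then f t else g t) =
              (if t ≤ c then A t (f t) else A t (g t)) := by
            split <;> rfl
          rw [hc'def] at ht ⊢
          rw [← hc'def] at ht ⊢
          rw [hset]
          rcases le_or_gt t c with htc | htc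
          · have htm : t ∈ Icc (0:ℝ) c := ⟨ht.1, htc⟩
            apply HasDerivWithinAt.union
            · have := (hf t htm).congr hEq1 (hEq1 t htm)
              simpa [if_pos htc] using this
            · rcases lt_or_eq_of_le htc with h | h
              · have hncl : t ∉ closure (Icc c c') := by
                  rw [closure_Icc]
                  intro hmem
                  exact absurd hmem.1 (not_le.2 h)
                exact hasDerivWithinAt_of_nmem_closure' hncl _
              · have htm2 : t ∈ Icc c c' := ⟨le_of_eq h.symm, le_trans h.le hcc'⟩
                have h4 := (hg t htm2).congr hEq2 (hEq2 t htm2)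
                simpa [if_pos htc, h, hgc] using h4
          · have htm2 : t ∈ Icc c c' := ⟨htc.le, ht.2⟩
            apply HasDerivWithinAt.union
            · have hncl : t ∉ closure (Icc (0:ℝ) c) := by
                rw [closure_Icc]
                intro hmem
                exact absurd hmem.2 (not_le.2 htc)
              exact hasDerivWithinAt_of_nmem_closure' hncl _
            · have := (hg t htm2).congr hEq2 (hEq2 t htm2)
              simpa [if_neg (not_le.2 htc)] using this
  obtain ⟨k, hk⟩ := exists_nat_ge (b / η)
  have hbk : b ≤ k * η := by
    rw [div_le_iff₀ hη] at hk
    linarith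
  obtain ⟨f, hf0, hf⟩ := main k
  rw [min_eq_right hbk] at hf
  exact ⟨f, hf0, hf⟩

end linode

lemma hasDerivWithinAt_Ici_of_Icc' {E : Type*} [NormedAddCommGroup E] [NormedSpace ℝ E]
    {u : ℝ → E} {d : E} {a b t : ℝ} (ht : t ∈ Ico a b)
    (h : HasDerivWithinAt u d (Icc a b) t) : HasDerivWithinAt u d (Ici t) t := by
  have h1 : HasDerivWithinAt u d (Icc t b) t := h.mono (Icc_subset_Icc ht.1 le_rfl)
  have h2 : Icc t b =ᶠ[𝓝 t] Ici t := by
    filter_upwards [Iio_mem_nhds ht.2] with y hy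
    simp only [mem_Icc, mem_Ici, eq_iff_iff]
    exact ⟨fun h => h.1, fun h => ⟨h, le_of_lt hy⟩⟩
  exact (hasDerivWithinAt_congr_set h2).1 h1

/-- Solution formula for a scalar linear ODE `u' = c u` on `[0, b]`. -/
lemma scalar_linear_ode {b : ℝ} (hb : 0 ≤ b) {u c : ℝ → ℝ} (hc : Continuous c)
    (hu : ∀ t ∈ Icc 0 b, HasDerivWithinAt u (c t * u t) (Icc 0 b) t) :
    u b = u 0 * exp (∫ s in (0:ℝ)..b, c s) := by
  set I : ℝ → ℝ := fun t => ∫ s in (0:ℝ)..t, c s with hIdef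
  have hI : ∀ t : ℝ, HasDerivAt I (c t) t := fun t =>
    (hc.integral_hasStrictDerivAt 0 t).hasDerivAt
  set G : ℝ → ℝ := fun t => u t * exp (-I t) with hGdef
  have hG : ∀ t ∈ Icc (0:ℝ) b, HasDerivWithinAt G 0 (Icc 0 b) t := by
    intro t ht
    have h1 : HasDerivWithinAt (fun s => exp (-I s)) (exp (-I t) * -c t) (Icc 0 b) t :=
      (((hI t).hasDerivWithinAt.neg).exp)
    have h2 := (hu t ht).mul h1
    have : c t * u t * exp (-I t) + u t * (exp (-I t) * -c t) = 0 := by ring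
    rwa [this] at h2
  have hGcont : ContinuousOn G (Icc 0 b) := fun t ht => (hG t ht).continuousWithinAt
  have hconst := constant_of_has_deriv_right_zero hGcont (fun t ht =>
    hasDerivWithinAt_Ici_of_Icc' ht (hG t ⟨ht.1, ht.2.le⟩))
  have hGb : G b = G 0 := hconst b ⟨hb, le_rfl⟩
  have hI0 : I 0 = 0 := intervalIntegral.integral_same
  rw [hGdef] at hGb
  simp only [hI0, neg_zero, exp_zero, mul_one] at hGb
  have hne : exp (-I b) ≠ 0 := (exp_pos _).ne'
  have : u b = u 0 / exp (-I b) := by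
    field_simp at hGb ⊢
    linarith [hGb]
  rw [this, exp_neg]
  field_simp
  rfl

noncomputable def detCM (n : ℕ) : ContinuousMultilinearMap ℝ (fun _ : Fin n => (Fin n → ℝ)) ℝ :=
  MultilinearMap.mkContinuous (Matrix.detRowAlternating : ((Fin n → ℝ)
      [⋀^Fin n]→ₗ[ℝ] ℝ)).toMultilinearMap
    (Fintype.card (Equiv.Perm (Fin n))) (by
      intro x
      have h1 : Matrix.detRowAlternating.toMultilinearMap x = (Matrix.of x).det := rfl
      rw [h1, Matrix.det_apply]
      refine (norm_sum_le _ _).trans ?_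
      have hterm : ∀ σ : Equiv.Perm (Fin n),
          ‖Equiv.Perm.sign σ • ∏ i, Matrix.of x (σ i) i‖ ≤ ∏ i, ‖x i‖ := by
        intro σ
        have h2 : ‖Equiv.Perm.sign σ • ∏ i, Matrix.of x (σ i) i‖
            = ‖∏ i, Matrix.of x (σ i) i‖ := by
          rcases Int.units_eq_one_or (Equiv.Perm.sign σ) with h | h <;> simp [h]
        rw [h2]
        have h3 : ‖∏ i, Matrix.of x (σ i) i‖ ≤ ∏ i, ‖x (σ i)‖ := by
          rw [norm_prod]
          apply Finset.prod_le_prod (fun i _ => norm_nonneg _)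
          intro i _
          exact norm_le_pi_norm (x (σ i)) i
        refine h3.trans (le_of_eq ?_)
        exact Equiv.prod_comp σ (fun i => ‖x i‖)
      refine (Finset.sum_le_sum fun σ _ => hterm σ).trans ?_
      rw [Finset.sum_const, Finset.card_univ]
      simp [nsmul_eq_mul])

lemma detCM_apply {n : ℕ} (x : Fin n → Fin n → ℝ) : detCM n x = (Matrix.of x).det := rfl

/-- Jacobi's formula / Liouville-type derivative of the determinant of a matrix of rows
each of whose derivatives is a linear combination of the rows. -/
lemma det_rows_hasDerivWithinAt {n : ℕ} {R : ℝ → Fin n → Fin n → ℝ} {s : Set ℝ} {t : ℝ}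
    {R' : Fin n → Fin n → ℝ} (h : HasDerivWithinAt R R' s t)
    {a : Fin n → Fin n → ℝ} (ha : ∀ i, R' i = ∑ k, a i k • R t k) :
    HasDerivWithinAt (fun τ => (Matrix.of (R τ)).det)
      ((∑ i, a i i) * (Matrix.of (R t)).det) s t := by
  have hF : HasFDerivAt (detCM n) ((detCM n).linearDeriv (R t)) (R t) :=
    (detCM n).hasFDerivAt (R t)
  have hcomp := hF.comp_hasDerivWithinAt t h
  have hval : (detCM n).linearDeriv (R t) R' = (∑ i, a i i) * (Matrix.of (R t)).det := by
    rw [ContinuousMultilinearMap.linearDeriv_apply]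
    have hterm : ∀ i, detCM n (Function.update (R t) i (R' i))
        = a i i * (Matrix.of (R t)).det := by
      intro i
      rw [ha i, detCM_apply]
      have hup : Matrix.of (Function.update (R t) i (∑ k, a i k • R t k))
          = (Matrix.of (R t)).updateRow i (∑ k, a i k • Matrix.of (R t) k) := rfl
      rw [hup, Matrix.det_updateRow_sum]
      simp [smul_eq_mul]
    rw [Finset.sum_congr rfl (fun i _ => hterm i), ← Finset.sum_mul]
  rw [hval] at hcomp
  exact hcomp
set_option maxHeartbeats 1000000 in
theorem aux_flow {n : ℕ} {X : (Fin n → ℝ) → (Fin n → ℝ)} {J : (Fin n → ℝ) → ℝ}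
    (hX : ContDiff ℝ (⊤ : ℕ∞) X) (hJ : ContDiff ℝ (⊤ : ℕ∞) J)
    (hIJM : ∀ x, ∑ j, X x j * fderiv ℝ J x (Pi.single j 1)
      = J x * ∑ j, fderiv ℝ (fun y => X y j) x (Pi.single j 1))
    (φ : ℝ → (Fin n → ℝ) → (Fin n → ℝ))
    (hφ0 : ∀ x, φ 0 x = x)
    (hφ : ∀ t x, HasDerivAt (fun τ => φ τ x) (X (φ t x)) t)
    (T : ℝ) (hT : 0 ≤ T) :
    ∀ x, J (φ T x) = J x *
      (Matrix.of fun i j => fderiv ℝ (fun y => φ T y i) x (Pi.single j 1)).det := by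
  intro x₀
  have clm_decomp : ∀ (L : (Fin n → ℝ) →L[ℝ] ℝ) (v : Fin n → ℝ),
      L v = ∑ j, v j * L (Pi.single j 1) := by
    intro L v
    have hv : v = ∑ j, Pi.single j (v j) := (Finset.univ_sum_single v).symm
    conv_lhs => rw [hv]
    rw [map_sum]
    refine Finset.sum_congr rfl fun j _ => ?_
    have h1 : Pi.single j (v j) = v j • (Pi.single j 1 : Fin n → ℝ) := by
      rw [← Pi.single_smul, smul_eq_mul, mul_one]
    rw [h1, map_smul, smul_eq_mul]
  rcases eq_or_lt_of_le hT with hT0 | hT0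
  · subst hT0
    have hfd : ∀ i j : Fin n,
        fderiv ℝ (fun y : Fin n → ℝ => φ 0 y i) x₀ (Pi.single j 1)
          = (Pi.single j 1 : Fin n → ℝ) i := by
      intro i j
      have hproj : (fun y : Fin n → ℝ => φ 0 y i) = fun y => y i :=
        funext fun y => by rw [hφ0]
      rw [hproj]
      have h2 : fderiv ℝ (fun y : Fin n → ℝ => y i) x₀
          = ContinuousLinearMap.proj (R := ℝ) (φ := fun _ : Fin n => ℝ) i :=
        (ContinuousLinearMap.proj (R := ℝ) (φ := fun _ : Fin n => ℝ) i).fderiv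
      rw [h2]
      rfl
    have hmat : (Matrix.of fun i j => fderiv ℝ (fun y => φ 0 y i) x₀ (Pi.single j 1))
        = (1 : Matrix (Fin n) (Fin n) ℝ) := by
      ext i j
      rw [Matrix.of_apply, hfd i j, Matrix.one_apply, Pi.single_apply]
    rw [hφ0 x₀, hmat, Matrix.det_one, mul_one]
  -- main case 0 < T
  set γ : ℝ → (Fin n → ℝ) := fun t => φ t x₀ with hγdef
  have hγd : ∀ t : ℝ, HasDerivAt γ (X (γ t)) t := fun t => hφ t x₀
  have hγc : Continuous γ := continuous_iff_continuousAt.2 fun t => (hγd t).continuousAt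
  have hγ0 : γ 0 = x₀ := hφ0 x₀
  have hXdiff : Differentiable ℝ X := hX.differentiable (by simp)
  have hXd : ∀ y, HasFDerivAt X (fderiv ℝ X y) y := fun y => (hXdiff y).hasFDerivAt
  have hDXc : Continuous (fderiv ℝ X) := hX.continuous_fderiv (by simp)
  have hJd : ∀ y, HasFDerivAt J (fderiv ℝ J y) y := fun y =>
    (hJ.differentiable (by simp) y).hasFDerivAt
  -- divergence
  set dfun : ℝ → ℝ := fun t => ∑ j, fderiv ℝ X (γ t) (Pi.single j 1) j with hdf
  have hdIJM : ∀ y, ∑ j, fderiv ℝ (fun z => X z j) y (Pi.single j 1)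
      = ∑ j, fderiv ℝ X y (Pi.single j 1) j := by
    intro y
    refine Finset.sum_congr rfl fun j _ => ?_
    have h1 : HasFDerivAt (fun z => X z j)
        ((ContinuousLinearMap.proj (R := ℝ) (φ := fun _ : Fin n => ℝ) j).comp (fderiv ℝ X y)) y :=
      (ContinuousLinearMap.proj (R := ℝ) (φ := fun _ : Fin n => ℝ) j).hasFDerivAt.comp y (hXd y)
    rw [h1.fderiv]
    rfl
  have hdc : Continuous dfun := by
    apply continuous_finset_sum
    intro j _
    exact (continuous_apply j).comp ((hDXc.comp hγc).clm_apply continuous_const)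
  -- compact sets and Lipschitz bounds
  have hK0 : IsCompact (γ '' Icc 0 T) := isCompact_Icc.image hγc
  obtain ⟨r, hr⟩ := hK0.isBounded.subset_closedBall 0
  have hr0 : 0 ≤ r := by
    have := hr ⟨0, ⟨le_rfl, hT⟩, rfl⟩
    rw [mem_closedBall] at this
    exact le_trans dist_nonneg this
  set B : Set (Fin n → ℝ) := closedBall 0 (r + 2) with hBdef
  have hBcompact : IsCompact B := isCompact_closedBall _ _
  obtain ⟨Λ₀, hΛ₀⟩ := hBcompact.exists_bound_of_continuousOn (hDXc.norm.continuousOn)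
  set Λ : ℝ := max Λ₀ 0 with hΛdef
  have hΛ : 0 ≤ Λ := le_max_right _ _
  have hΛb : ∀ y ∈ B, ‖fderiv ℝ X y‖ ≤ Λ := by
    intro y hy
    have h := hΛ₀ y hy
    rw [norm_norm] at h
    exact h.trans (le_max_left _ _)
  have hLipX : LipschitzOnWith Λ.toNNReal X B := by
    apply (convex_closedBall _ _).lipschitzOnWith_of_nnnorm_hasFDerivWithin_le
      (fun y hy => (hXd y).hasFDerivWithinAt)
    intro y hy
    rw [← NNReal.coe_le_coe, coe_nnnorm, Real.coe_toNNReal _ hΛ]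
    exact hΛb y hy
  have hγB : ∀ t ∈ Icc (0:ℝ) T, γ t ∈ B := by
    intro t ht
    have h1 := hr ⟨t, ht, rfl⟩
    exact closedBall_subset_closedBall (by linarith) h1
  -- closeness of nearby trajectories
  set δ₀ : ℝ := exp (-(Λ * T)) / 2 with hδ₀def
  have hδ₀pos : 0 < δ₀ := by positivity
  have hδ₀mul : δ₀ * exp (Λ * T) = 1/2 := by
    rw [hδ₀def, div_mul_eq_mul_div, ← exp_add]
    simp
  have hδ₀half : δ₀ ≤ 1/2 := by
    rw [hδ₀def]
    have h1 : exp (-(Λ * T)) ≤ 1 := by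
      rw [← exp_zero]
      exact exp_le_exp.2 (by nlinarith)
    linarith
  have stay : ∀ z : Fin n → ℝ, dist z x₀ ≤ δ₀ → ∀ t ∈ Icc 0 T,
      dist (φ t z) (γ t) ≤ dist z x₀ * exp (Λ * t) ∧ φ t z ∈ B := by
    intro z hz
    have hzc : Continuous fun t => φ t z :=
      continuous_iff_continuousAt.2 fun t => (hφ t z).continuousAt
    have hd0 : dist (φ 0 z) (γ 0) = dist z x₀ := by rw [hφ0, hγ0]
    set A : Set ℝ := {t | t ∈ Icc 0 T ∧ ∀ s ∈ Icc 0 t, dist (φ s z) (γ s) ≤ 1} with hAdef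
    have h0A : (0:ℝ) ∈ A := by
      refine ⟨⟨le_rfl, hT⟩, ?_⟩
      intro s hs
      have hs0 : s = 0 := le_antisymm hs.2 hs.1
      rw [hs0, hd0]
      linarith
    have hAbdd : BddAbove A := ⟨T, fun t ht => ht.1.2⟩
    have hAne : A.Nonempty := ⟨0, h0A⟩
    set t₁ : ℝ := sSup A with ht₁def
    have ht₁0 : 0 ≤ t₁ := le_csSup hAbdd h0A
    have ht₁T : t₁ ≤ T := csSup_le hAne fun t ht => ht.1.2
    have hIcolt : ∀ s, 0 ≤ s → s < t₁ → dist (φ s z) (γ s) ≤ 1 := by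
      intro s hs0 hst
      obtain ⟨t, htA, hst'⟩ := exists_lt_of_lt_csSup hAne hst
      exact htA.2 s ⟨hs0, hst'.le⟩
    have hdcont : Continuous fun s => dist (φ s z) (γ s) := hzc.dist hγc
    have hIcc1 : ∀ s ∈ Icc 0 t₁, dist (φ s z) (γ s) ≤ 1 := by
      intro s hs
      rcases lt_or_eq_of_le hs.2 with h | h
      · exact hIcolt s hs.1 h
      · rcases eq_or_lt_of_le ht₁0 with h0 | h0
        · have hs0 : s = 0 := by rw [h, ← h0]
          rw [hs0, hd0]
          linarith
        · rw [h]
          have hev : ∀ᶠ u in 𝓝[<] t₁, dist (φ u z) (γ u) ≤ 1 := by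
            filter_upwards [Ico_mem_nhdsLT h0] with u hu
            exact hIcolt u hu.1 hu.2
          exact le_of_tendsto (hdcont.continuousAt.tendsto.mono_left nhdsWithin_le_nhds) hev
    have hzB : ∀ s ∈ Icc 0 t₁, φ s z ∈ B := by
      intro s hs
      have h1 := hIcc1 s hs
      have h2 : γ s ∈ closedBall 0 r := hr ⟨s, ⟨hs.1, hs.2.trans ht₁T⟩, rfl⟩
      rw [mem_closedBall] at h2 ⊢
      calc dist (φ s z) 0 ≤ dist (φ s z) (γ s) + dist (γ s) 0 := dist_triangle _ _ _
        _ ≤ 1 + r := by linarith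
        _ ≤ r + 2 := by linarith
    have hγB' : ∀ s ∈ Icc 0 t₁, γ s ∈ B := fun s hs => hγB s ⟨hs.1, hs.2.trans ht₁T⟩
    have hgron := dist_le_of_trajectories_ODE_of_mem (v := fun _ => X)
      (s := fun _ => B) (K := Λ.toNNReal) (fun _ _ => hLipX)
      (hzc.continuousOn) (fun t _ => (hφ t z).hasDerivWithinAt)
      (fun t ht => hzB t ⟨ht.1, ht.2.le⟩) (hγc.continuousOn)
      (fun t _ => (hγd t).hasDerivWithinAt) (fun t ht => hγB' t ⟨ht.1, ht.2.le⟩)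
      (le_of_eq hd0)
    have hgron' : ∀ t ∈ Icc 0 t₁, dist (φ t z) (γ t) ≤ dist z x₀ * exp (Λ * t) := by
      intro t ht
      have := hgron t ht
      rwa [Real.coe_toNNReal _ hΛ, sub_zero] at this
    have ht₁eq : t₁ = T := by
      by_contra hne
      have ht₁lt : t₁ < T := lt_of_le_of_ne ht₁T hne
      have hval : dist (φ t₁ z) (γ t₁) ≤ 1/2 := by
        have h1 := hgron' t₁ ⟨ht₁0, le_rfl⟩
        have h2 : dist z x₀ * exp (Λ * t₁) ≤ δ₀ * exp (Λ * T) := by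
          apply mul_le_mul hz (exp_le_exp.2 (by nlinarith)) (exp_pos _).le hδ₀pos.le
        rw [hδ₀mul] at h2
        linarith
      have hev := hdcont.continuousAt.preimage_mem_nhds
        (Iio_mem_nhds (show dist (φ t₁ z) (γ t₁) < 1 by linarith))
      obtain ⟨η, hη, hball⟩ := Metric.mem_nhds_iff.1 hev
      set t₂ : ℝ := min (t₁ + η/2) T with ht₂def
      have ht₂gt : t₁ < t₂ := lt_min (by linarith) ht₁lt
      have ht₂A : t₂ ∈ A := by
        refine ⟨⟨le_trans ht₁0 ht₂gt.le, min_le_right _ _⟩, ?_⟩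
        intro s hs
        rcases le_or_gt s t₁ with h | h
        · exact hIcc1 s ⟨hs.1, h⟩
        · have hst₂ : s ≤ t₁ + η/2 := le_trans hs.2 (min_le_left _ _)
          have hsball : s ∈ Metric.ball t₁ η := by
            rw [mem_ball, Real.dist_eq, abs_sub_lt_iff]
            constructor <;> linarith
          exact le_of_lt (hball hsball)
      have := le_csSup hAbdd ht₂A
      linarith
    intro t ht
    rw [← ht₁eq] at ht
    refine ⟨?_, hzB t ht⟩
    have := hgron' t ht
    rwa [dist_comm z x₀] at this ⊢
  -- variational equation: matrix solution m
  set DCL : ℝ → ((Fin n → ℝ) →L[ℝ] (Fin n → ℝ)) →L[ℝ] ((Fin n → ℝ) →L[ℝ] (Fin n → ℝ)) :=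
    fun t => (ContinuousLinearMap.compL ℝ (Fin n → ℝ) (Fin n → ℝ) (Fin n → ℝ))
      (fderiv ℝ X (γ t)) with hDCLdef
  have hDCLc : Continuous DCL :=
    (ContinuousLinearMap.compL ℝ (Fin n → ℝ) (Fin n → ℝ) (Fin n → ℝ)).continuous.comp
      (hDXc.comp hγc)
  obtain ⟨m, hm0, hm⟩ := exists_linear_ode_solution DCL hDCLc T hT
    (ContinuousLinearMap.id ℝ (Fin n → ℝ))
  have hm' : ∀ t ∈ Icc (0:ℝ) T,
      HasDerivWithinAt m ((fderiv ℝ X (γ t)).comp (m t)) (Icc 0 T) t := by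
    intro t ht
    simpa [hDCLdef] using hm t ht
  have hmh : ∀ (h : Fin n → ℝ), ∀ t ∈ Icc (0:ℝ) T,
      HasDerivWithinAt (fun τ => m τ h) (fderiv ℝ X (γ t) (m t h)) (Icc 0 T) t := by
    intro h t ht
    have h1 := (hm' t ht).clm_apply (hasDerivWithinAt_const t _ h)
    simpa using h1
  -- identification of m T with the derivative of the time-T map
  have key : HasFDerivAt (φ T) (m T) x₀ := by
    rw [hasFDerivAt_iff_isLittleO_nhds_zero, Asymptotics.isLittleO_iff]
    intro cξ hc
    set CG : ℝ := gronwallBound 0 Λ 1 T with hCGdef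
    have hCG0 : 0 ≤ CG := gronwallBound_zero_nonneg hΛ hT
    set ε₁ : ℝ := cξ / ((CG + 1) * exp (Λ * T)) with hε₁def
    have hε₁pos : 0 < ε₁ := by positivity
    obtain ⟨δl, hδl, hlin⟩ := uniform_linearization hX hK0 hε₁pos
    set δ₂ : ℝ := min δ₀ (δl / exp (Λ * T)) with hδ₂def
    have hδ₂pos : 0 < δ₂ := lt_min hδ₀pos (by positivity)
    filter_upwards [Metric.closedBall_mem_nhds (0 : Fin n → ℝ) hδ₂pos] with h hh
    rw [mem_closedBall_zero_iff] at hh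
    set z : Fin n → ℝ := x₀ + h with hzdef
    have hzx : dist z x₀ = ‖h‖ := by
      rw [dist_eq_norm, hzdef]
      simp
    have hzδ₀ : dist z x₀ ≤ δ₀ := by
      rw [hzx]
      exact hh.trans (min_le_left _ _)
    have hstayz := stay z hzδ₀
    set θ : ℝ → (Fin n → ℝ) := fun t => φ t z - γ t - m t h with hθdef
    have hθ0 : θ 0 = 0 := by
      simp only [hθdef, hφ0, hγ0, hm0, hzdef]
      simp
    have hθd : ∀ t ∈ Icc (0:ℝ) T, HasDerivWithinAt θ
        (X (φ t z) - X (γ t) - fderiv ℝ X (γ t) (m t h)) (Icc 0 T) t :=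
      fun t ht => (((hφ t z).hasDerivWithinAt.sub (hγd t).hasDerivWithinAt)).sub (hmh h t ht)
    have hθcont : ContinuousOn θ (Icc 0 T) := fun t ht => (hθd t ht).continuousWithinAt
    have hbound : ∀ t ∈ Ico (0:ℝ) T,
        ‖X (φ t z) - X (γ t) - fderiv ℝ X (γ t) (m t h)‖
          ≤ Λ * ‖θ t‖ + ε₁ * exp (Λ * T) * ‖h‖ := by
      intro t ht
      have htm : t ∈ Icc (0:ℝ) T := ⟨ht.1, ht.2.le⟩
      obtain ⟨hst1, hst2⟩ := hstayz t htm
      have hba : ‖φ t z - γ t‖ ≤ ‖h‖ * exp (Λ * T) := by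
        rw [← dist_eq_norm]
        refine hst1.trans ?_
        rw [hzx]
        exact mul_le_mul_of_nonneg_left
          (exp_le_exp.2 (mul_le_mul_of_nonneg_left htm.2 hΛ)) (norm_nonneg h)
      have hbaδ : ‖φ t z - γ t‖ ≤ δl := by
        refine hba.trans ?_
        have h1 : ‖h‖ ≤ δl / exp (Λ * T) := hh.trans (min_le_right _ _)
        calc ‖h‖ * exp (Λ * T) ≤ (δl / exp (Λ * T)) * exp (Λ * T) :=
              mul_le_mul_of_nonneg_right h1 (exp_pos _).le
          _ = δl := by field_simp
      have hγmem : γ t ∈ γ '' Icc 0 T := ⟨t, htm, rfl⟩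
      have hlin2 := hlin (γ t) hγmem (φ t z) hbaδ
      have halg : X (φ t z) - X (γ t) - fderiv ℝ X (γ t) (m t h)
          = (X (φ t z) - X (γ t) - fderiv ℝ X (γ t) (φ t z - γ t))
            + fderiv ℝ X (γ t) (θ t) := by
        simp only [hθdef, map_sub]
        abel
      rw [halg]
      refine (norm_add_le _ _).trans ?_
      have h1 : ‖X (φ t z) - X (γ t) - fderiv ℝ X (γ t) (φ t z - γ t)‖
          ≤ ε₁ * (‖h‖ * exp (Λ * T)) :=
        le_trans hlin2 (mul_le_mul_of_nonneg_left hba hε₁pos.le)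
      have h2 : ‖fderiv ℝ X (γ t) (θ t)‖ ≤ Λ * ‖θ t‖ := by
        refine le_trans ((fderiv ℝ X (γ t)).le_opNorm _) ?_
        exact mul_le_mul_of_nonneg_right (hΛb (γ t) (hγB t htm)) (norm_nonneg _)
      calc _ ≤ ε₁ * (‖h‖ * exp (Λ * T)) + Λ * ‖θ t‖ := add_le_add h1 h2
        _ = Λ * ‖θ t‖ + ε₁ * exp (Λ * T) * ‖h‖ := by ring
    have hgb := norm_le_gronwallBound_of_norm_deriv_right_le hθcont
      (fun t ht => hasDerivWithinAt_Ici_of_Icc ht (hθd t ⟨ht.1, ht.2.le⟩))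
      (show ‖θ 0‖ ≤ (0:ℝ) by rw [hθ0]; simp) hbound T ⟨hT, le_rfl⟩
    have hfin : ‖θ T‖ ≤ cξ * ‖h‖ := by
      refine hgb.trans ?_
      rw [sub_zero, gronwallBound_zero_smul]
      have hkey : ε₁ * exp (Λ * T) * CG ≤ cξ := by
        have hpos : (0:ℝ) < (CG + 1) * exp (Λ * T) := by positivity
        rw [hε₁def, div_mul_eq_mul_div, div_mul_eq_mul_div, div_le_iff₀ hpos]
        nlinarith [exp_pos (Λ * T), hc]
      calc ε₁ * exp (Λ * T) * ‖h‖ * CG = (ε₁ * exp (Λ * T) * CG) * ‖h‖ := by ring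
        _ ≤ cξ * ‖h‖ := mul_le_mul_of_nonneg_right hkey (norm_nonneg h)
    exact hfin
  -- components of the derivative
  have hcomp : ∀ i j : Fin n,
      fderiv ℝ (fun y => φ T y i) x₀ (Pi.single j 1) = m T (Pi.single j 1) i := by
    intro i j
    have h1 : HasFDerivAt (fun y => φ T y i)
        ((ContinuousLinearMap.proj (R := ℝ) (φ := fun _ : Fin n => ℝ) i).comp (m T)) x₀ :=
      (ContinuousLinearMap.proj (R := ℝ) (φ := fun _ : Fin n => ℝ) i).hasFDerivAt.comp x₀ key
    rw [h1.fderiv]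
    rfl
  -- scalar ODE for J along the flow
  have hu₁ : ∀ t ∈ Icc (0:ℝ) T,
      HasDerivWithinAt (fun τ => J (γ τ)) (dfun t * J (γ t)) (Icc 0 T) t := by
    intro t ht
    have h1 : HasDerivAt (fun τ => J (γ τ)) (fderiv ℝ J (γ t) (X (γ t))) t :=
      (hJd (γ t)).comp_hasDerivAt t (hγd t)
    have h2 : fderiv ℝ J (γ t) (X (γ t)) = dfun t * J (γ t) := by
      rw [clm_decomp (fderiv ℝ J (γ t)) (X (γ t)), hIJM (γ t), hdIJM (γ t)]
      ring
    rw [← h2]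
    exact h1.hasDerivWithinAt
  have hu₁T := scalar_linear_ode hT hdc hu₁
  -- scalar ODE for the determinant (Liouville)
  set Rw : ℝ → Fin n → Fin n → ℝ := fun t i j => m t (Pi.single j 1) i with hRwdef
  have hRwd : ∀ t ∈ Icc (0:ℝ) T, HasDerivWithinAt Rw
      (fun i j => fderiv ℝ X (γ t) (m t (Pi.single j 1)) i) (Icc 0 T) t := by
    intro t ht
    rw [hasDerivWithinAt_pi]
    intro i
    rw [hasDerivWithinAt_pi]
    intro j
    exact (hasDerivWithinAt_pi.1 (hmh (Pi.single j 1) t ht)) i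
  have hacomb : ∀ t, ∀ i : Fin n, (fun j => fderiv ℝ X (γ t) (m t (Pi.single j 1)) i)
      = ∑ k, (fderiv ℝ X (γ t) (Pi.single k 1) i) • Rw t k := by
    intro t i
    funext j
    have h1 := clm_decomp
      ((ContinuousLinearMap.proj (R := ℝ) (φ := fun _ : Fin n => ℝ) i).comp (fderiv ℝ X (γ t)))
      (m t (Pi.single j 1))
    simp only [ContinuousLinearMap.coe_comp', Function.comp_apply,
      ContinuousLinearMap.proj_apply] at h1
    rw [h1, Finset.sum_apply]
    refine Finset.sum_congr rfl fun k _ => ?_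
    simp only [Pi.smul_apply, smul_eq_mul, hRwdef]
    ring
  have hu₂ : ∀ t ∈ Icc (0:ℝ) T, HasDerivWithinAt (fun τ => (Matrix.of (Rw τ)).det)
      (dfun t * (Matrix.of (Rw t)).det) (Icc 0 T) t := by
    intro t ht
    have h1 := det_rows_hasDerivWithinAt (hRwd t ht)
      (a := fun i k => fderiv ℝ X (γ t) (Pi.single k 1) i) (fun i => by rw [hacomb t i])
    exact h1
  have hu₂T := scalar_linear_ode hT hdc hu₂
  -- initial values and conclusion
  have hRw0 : Matrix.of (Rw 0) = (1 : Matrix (Fin n) (Fin n) ℝ) := by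
    ext i j
    rw [Matrix.of_apply]
    simp only [hRwdef, hm0, ContinuousLinearMap.coe_id', id_eq]
    rw [Matrix.one_apply, Pi.single_apply]
  have hgoalmat : (Matrix.of fun i j => fderiv ℝ (fun y => φ T y i) x₀ (Pi.single j 1))
      = Matrix.of (Rw T) := by
    ext i j
    rw [Matrix.of_apply, Matrix.of_apply, hcomp i j]
  rw [hgoalmat]
  have hdet : (Matrix.of (Rw T)).det = exp (∫ s in (0:ℝ)..T, dfun s) := by
    rw [hu₂T, hRw0, Matrix.det_one, one_mul]
  rw [hdet]
  rw [show φ T x₀ = γ T from rfl, hu₁T, hγ0]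

/-- For the time-`T` map `P = φ_T` of the flow of `X`, an inverse Jacobian multiplier
satisfies `J(P(x)) = J(x) · det DP(x)`. -/
theorem stmt9 (n : ℕ) (X : (Fin n → ℝ) → (Fin n → ℝ)) (J : (Fin n → ℝ) → ℝ)
    (hX : ContDiff ℝ (⊤ : ℕ∞) X) (hJ : ContDiff ℝ (⊤ : ℕ∞) J)
    (hIJM : ∀ x, ∑ j, X x j * fderiv ℝ J x (Pi.single j 1)
      = J x * ∑ j, fderiv ℝ (fun y => X y j) x (Pi.single j 1))
    (φ : ℝ → (Fin n → ℝ) → (Fin n → ℝ))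
    (hφ0 : ∀ x, φ 0 x = x)
    (hφ : ∀ t x, HasDerivAt (fun τ => φ τ x) (X (φ t x)) t)
    (T : ℝ) (hsmooth : ContDiff ℝ (⊤ : ℕ∞) (φ T)) :
    ∀ x, J (φ T x) = J x *
      (Matrix.of fun i j => fderiv ℝ (fun y => φ T y i) x (Pi.single j 1)).det := by
  rcases le_or_gt 0 T with hT | hT
  · exact aux_flow hX hJ hIJM φ hφ0 hφ T hT
  · intro x
    set X' : (Fin n → ℝ) → (Fin n → ℝ) := fun y => -X y with hX'def
    set ψ : ℝ → (Fin n → ℝ) → (Fin n → ℝ) := fun t y => φ (-t) y with hψdef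
    have hψ0 : ∀ y, ψ 0 y = y := fun y => by simp [hψdef, hφ0]
    have hX' : ContDiff ℝ (⊤ : ℕ∞) X' := hX.neg
    have hψd : ∀ t y, HasDerivAt (fun τ => ψ τ y) (X' (ψ t y)) t := by
      intro t y
      have h1 : HasDerivAt (fun τ : ℝ => -τ) (-1) t := (hasDerivAt_id t).neg
      have h2 := (hφ (-t) y).scomp t h1
      simpa [hψdef, hX'def, Function.comp_def] using h2
    have hIJM' : ∀ x, ∑ j, X' x j * fderiv ℝ J x (Pi.single j 1)
        = J x * ∑ j, fderiv ℝ (fun y => X' y j) x (Pi.single j 1) := by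
      intro x
      have hL : ∑ j, X' x j * fderiv ℝ J x (Pi.single j 1)
          = -∑ j, X x j * fderiv ℝ J x (Pi.single j 1) := by
        rw [← Finset.sum_neg_distrib]
        refine Finset.sum_congr rfl fun j _ => ?_
        simp [hX'def]
      have hR : ∀ j : Fin n, fderiv ℝ (fun y => X' y j) x (Pi.single j 1)
          = -fderiv ℝ (fun y => X y j) x (Pi.single j 1) := by
        intro j
        have h3 : (fun y => X' y j) = fun y => -(X y j) := rfl
        rw [h3, fderiv_fun_neg]
        simp
      have hR' : ∑ j, fderiv ℝ (fun y => X' y j) x (Pi.single j 1)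
          = -∑ j, fderiv ℝ (fun y => X y j) x (Pi.single j 1) := by
        rw [← Finset.sum_neg_distrib]
        exact Finset.sum_congr rfl fun j _ => hR j
      rw [hL, hR', hIJM x]
      ring
    have key := aux_flow hX' hJ hIJM' ψ hψ0 hψd (-T) (by linarith) x
    simpa [hψdef, neg_neg] using key
end

section
/- Let d : (−ε, ε) × ℝ^m → ℝ be analytic with d(r, 0) = δ r^{2l−1} + O(r^{2l}) for some δ ≠ 0 and integer l ≥ 1, and suppose d(0, μ) = 0 for all μ. Then there exist a neighborhood of (0,0) and ε₀ > 0 such that for each parameter μ with |μ| < ε₀, the equation d(r, μ) = 0 has at most 2l − 2 nonzero roots r in that neighborhood; if moreover d is odd in r (d(−r, μ) = −d(r, μ)), it has at most l − 1 positive roots. -/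
/-!
Write `n = 2l - 1`. Since `d(·, 0)` is analytic with `d(r, 0) - δ r^n = O(r^{n+1})`, its Taylor
coefficient of order `n` is `δ`, so `∂_r^n d(0, 0) = n! δ ≠ 0`. The partial derivative `∂_r^n d`
is again analytic, hence nonzero on a ball around the origin. On every slice `r ↦ d(r, μ)` of an
interval in that ball, Rolle's theorem (a zero of `f'` between any two zeros of `f`) applied `n`
times shows that there are at most `n` zeros, one of which is `r = 0`. When `d` is odd in `r`,
the nonzero roots come in pairs `±r`.
-/

open Asymptotics Filter Topology Set
open scoped Nat

section AnalyticOrder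

variable {𝕜 E : Type*} [NontriviallyNormedField 𝕜] [NormedAddCommGroup E] [NormedSpace 𝕜 E]

theorem natCast_le_analyticOrderAt_of_isBigO {f : 𝕜 → E} {z₀ : 𝕜} {n : ℕ}
    (hf : AnalyticAt 𝕜 f z₀) (hO : f =O[𝓝 z₀] fun z => (z - z₀) ^ n) :
    (n : ℕ∞) ≤ analyticOrderAt f z₀ := by
  -- An order `m < n` gives `f = (z - z₀) ^ m • g` with `g z₀ ≠ 0`, but `g = O((z - z₀) ^ (n - m))`.
  by_contra! hlt
  have hfin : analyticOrderAt f z₀ ≠ ⊤ := ne_top_of_lt hlt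
  obtain ⟨g, hg, hg0, hfg⟩ := hf.analyticOrderAt_ne_top.mp hfin
  set m := analyticOrderNatAt f z₀
  have hmn : m < n := by
    rw [← Nat.cast_analyticOrderNatAt hfin] at hlt
    exact_mod_cast hlt
  obtain ⟨C, hC⟩ := hO.bound
  have hg_bound : ∀ᶠ z in 𝓝[≠] z₀, ‖g z‖ ≤ C * ‖z - z₀‖ ^ (n - m) := by
    filter_upwards [nhdsWithin_le_nhds (hC.and hfg), self_mem_nhdsWithin] with z ⟨hz, hfz⟩ hne
    have hpos : 0 < ‖z - z₀‖ ^ m := pow_pos (norm_pos_iff.2 (sub_ne_zero.2 hne)) m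
    rw [hfz, norm_smul, norm_pow, norm_pow, ← Nat.add_sub_cancel' hmn.le, pow_add,
      mul_left_comm] at hz
    exact le_of_mul_le_mul_left hz hpos
  have hg_zero : Tendsto g (𝓝[≠] z₀) (𝓝 0) := by
    refine squeeze_zero_norm' hg_bound ?_
    have hcont : Continuous fun z => C * ‖z - z₀‖ ^ (n - m) := by fun_prop
    simpa [zero_pow (Nat.sub_ne_zero_of_lt hmn)] using
      (hcont.tendsto z₀).mono_left nhdsWithin_le_nhds
  exact hg0 (tendsto_nhds_unique (hg.continuousAt.tendsto.mono_left nhdsWithin_le_nhds) hg_zero)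

theorem iteratedDeriv_eq_factorial_mul_of_isBigO [CharZero 𝕜] [CompleteSpace 𝕜] {f : 𝕜 → 𝕜}
    {δ : 𝕜} {n : ℕ} (hf : AnalyticAt 𝕜 f 0)
    (hO : (fun z => f z - δ * z ^ n) =O[𝓝 0] fun z => z ^ (n + 1)) :
    iteratedDeriv n f 0 = n ! * δ := by
  have hrem : AnalyticAt 𝕜 (fun z => f z - δ * z ^ n) 0 := by fun_prop
  have hvanish := (natCast_le_analyticOrderAt_iff_iteratedDeriv_eq_zero hrem).mp
    (natCast_le_analyticOrderAt_of_isBigO hrem (by simpa using hO)) n n.lt_succ_self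
  rw [iteratedDeriv_fun_sub hf.contDiffAt (by fun_prop), iteratedDeriv_const_mul_field,
    iteratedDeriv_fun_pow_zero, if_pos rfl, sub_eq_zero] at hvanish
  rw [hvanish, mul_comm]

end AnalyticOrder

section Rolle

variable {f : ℝ → ℝ} {s : Set ℝ}

theorem exists_finset_deriv_eq_zero_card_add_one_ge (hs : s.OrdConnected) (hf : ContinuousOn f s)
    {T : Finset ℝ} (hT : ↑T ⊆ {x ∈ s | f x = 0}) :
    ∃ t : Finset ℝ, ↑t ⊆ {x ∈ s | deriv f x = 0} ∧ T.card ≤ t.card + 1 := by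
  have hrolle : ∀ p : ℝ × ℝ, ∃ c, p.1 ∈ T → p.2 ∈ T → p.1 < p.2 →
      c ∈ Ioo p.1 p.2 ∧ deriv f c = 0 := by
    rintro ⟨x, y⟩
    by_cases h : x ∈ T ∧ y ∈ T ∧ x < y
    · obtain ⟨hx, hy, hxy⟩ := h
      obtain ⟨c, hc, hc'⟩ := exists_deriv_eq_zero hxy
        (hf.mono (hs.out (hT hx).1 (hT hy).1)) ((hT hx).2.trans (hT hy).2.symm)
      exact ⟨c, fun _ _ _ => ⟨hc, hc'⟩⟩
    · exact ⟨0, fun hx hy hxy => absurd ⟨hx, hy, hxy⟩ h⟩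
  choose c hc using hrolle
  classical
  refine ⟨((T ×ˢ T).filter fun p => p.1 < p.2).image c, ?_, ?_⟩
  · simp only [Finset.coe_image, Finset.coe_filter, Finset.mem_product, image_subset_iff]
    rintro ⟨x, y⟩ ⟨⟨hx, hy⟩, hxy⟩
    obtain ⟨hmem, hzero⟩ := hc (x, y) hx hy hxy
    exact ⟨hs.out (hT hx).1 (hT hy).1 (Ioo_subset_Icc_self hmem), hzero⟩
  · refine Finset.card_le_of_interleaved fun x hx y hy hxy _ =>
      ⟨c (x, y), Finset.mem_image_of_mem _ ?_, hc (x, y) hx hy hxy |>.1⟩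
    simp [hx, hy, hxy]

theorem card_le_of_iteratedDeriv_ne_zero (hs : s.OrdConnected) (hs' : IsOpen s) {n : ℕ}
    (hf : ContDiffOn ℝ n f s)
    (hn : ∀ x ∈ s, iteratedDeriv n f x ≠ 0) {T : Finset ℝ} (hT : ↑T ⊆ {x ∈ s | f x = 0}) :
    T.card ≤ n := by
  induction n generalizing f T with
  | zero =>
    rw [Nat.le_zero, Finset.card_eq_zero, Finset.eq_empty_iff_forall_notMem]
    exact fun x hx => hn x (hT hx).1 (by simpa using (hT hx).2)
  | succ n ih =>
    obtain ⟨t, ht, hcard⟩ := exists_finset_deriv_eq_zero_card_add_one_ge hs hf.continuousOn hT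
    have := ih (hf.deriv_of_isOpen hs' (by simp))
      (fun x hx => by simpa [iteratedDeriv_succ'] using hn x hx) ht
    omega

theorem encard_setOf_eq_zero_le_of_iteratedDeriv_ne_zero (hs : s.OrdConnected) (hs' : IsOpen s)
    {n : ℕ} (hf : ContDiffOn ℝ n f s) (hn : ∀ x ∈ s, iteratedDeriv n f x ≠ 0) :
    {x ∈ s | f x = 0}.encard ≤ n := by
  by_contra! hlt
  obtain ⟨T, hTs, hTcard⟩ := exists_subset_encard_eq (Order.add_one_le_of_lt hlt)
  obtain ⟨T, rfl⟩ := (finite_of_encard_eq_coe hTcard).exists_finset_coe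
  rw [encard_coe_eq_coe_finsetCard] at hTcard
  have := card_le_of_iteratedDeriv_ne_zero hs hs' hf hn hTs
  norm_cast at hTcard
  omega

end Rolle

section PartialDeriv

variable {𝕜 E F : Type*} [NontriviallyNormedField 𝕜] [NormedAddCommGroup E] [NormedSpace 𝕜 E]
  [NormedAddCommGroup F] [NormedSpace 𝕜 F]

noncomputable def iteratedDerivFst (f : 𝕜 × E → F) : ℕ → 𝕜 × E → F
  | 0 => f
  | k + 1 => fun p => fderiv 𝕜 (iteratedDerivFst f k) p (1, 0)

variable [CompleteSpace F] {f : 𝕜 × E → F}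

theorem AnalyticAt.iteratedDerivFst {p : 𝕜 × E} (hf : AnalyticAt 𝕜 f p) (k : ℕ) :
    AnalyticAt 𝕜 (iteratedDerivFst f k) p := by
  induction k with
  | zero => exact hf
  | succ k ih =>
    exact ((ContinuousLinearMap.apply 𝕜 F ((1 : 𝕜), (0 : E))).analyticAt _).comp ih.fderiv

theorem iteratedDeriv_eq_iteratedDerivFst {x : 𝕜} {μ : E} (hf : AnalyticAt 𝕜 f (x, μ))
    (k : ℕ) : iteratedDeriv k (fun s => f (s, μ)) x = iteratedDerivFst f k (x, μ) := by
  induction k generalizing x with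
  | zero => rfl
  | succ k ih =>
    have heq : iteratedDeriv k (fun s => f (s, μ)) =ᶠ[𝓝 x]
        fun s => iteratedDerivFst f k (s, μ) :=
      ((Continuous.prodMk_left μ).tendsto x).eventually hf.eventually_analyticAt |>.mono
        fun s hs => ih hs
    have hderiv : HasDerivAt (fun s => iteratedDerivFst f k (s, μ))
        (iteratedDerivFst f (k + 1) (x, μ)) x :=
      (hf.iteratedDerivFst k).differentiableAt.hasFDerivAt.comp_hasDerivAt x
        ((hasDerivAt_id x).prodMk (hasDerivAt_const x μ))
    rw [iteratedDeriv_succ, heq.deriv_eq, hderiv.deriv]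

end PartialDeriv

theorem two_mul_encard_le_of_neg_mem {α : Type*} [AddCommGroup α] [LinearOrder α]
    [IsOrderedAddMonoid α] {P S : Set α} (hpos : ∀ x ∈ P, 0 < x) (hPS : ∀ x ∈ P, x ∈ S ∧ -x ∈ S) :
    2 * P.encard ≤ S.encard := by
  have hdisj : Disjoint P (-P) := by
    rw [disjoint_left]
    intro x hx hx'
    exact (neg_pos.mp (hpos _ hx')).not_gt (by simpa using hpos x hx)
  calc 2 * P.encard = (P ∪ -P).encard := by
        rw [encard_union_eq hdisj, encard_neg, two_mul]
    _ ≤ S.encard := encard_le_encard (union_subset (fun x hx => (hPS x hx).1)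
        fun x hx => by simpa using (hPS _ hx).2)

theorem encard_setOf_ne_zero_le_of_encard_setOf_le {g : ℝ → ℝ} {ρ : ℝ} {k : ℕ} (hρ : 0 < ρ)
    (h0 : g 0 = 0) (hg : {r ∈ Ioo (-ρ) ρ | g r = 0}.encard ≤ (k + 1 : ℕ)) :
    {r : ℝ | r ≠ 0 ∧ |r| < ρ ∧ g r = 0}.encard ≤ k := by
  have hsub : insert 0 {r : ℝ | r ≠ 0 ∧ |r| < ρ ∧ g r = 0} ⊆ {r ∈ Ioo (-ρ) ρ | g r = 0} := by
    rintro r (rfl | ⟨-, hr, hgr⟩)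
    · exact ⟨⟨neg_neg_of_pos hρ, hρ⟩, h0⟩
    · exact ⟨abs_lt.mp hr, hgr⟩
  have := (encard_le_encard hsub).trans hg
  rw [encard_insert_of_notMem (fun h => h.1 rfl), Nat.cast_add, Nat.cast_one] at this
  exact (ENat.add_le_add_iff_right ENat.one_ne_top).mp this

theorem encard_setOf_pos_le_of_odd {g : ℝ → ℝ} {ρ : ℝ} {k : ℕ} (hodd : ∀ r, g (-r) = -g r)
    (hg : {r : ℝ | r ≠ 0 ∧ |r| < ρ ∧ g r = 0}.encard ≤ (2 * k : ℕ)) :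
    {r : ℝ | 0 < r ∧ r < ρ ∧ g r = 0}.encard ≤ k := by
  have hpairs := (two_mul_encard_le_of_neg_mem (P := {r : ℝ | 0 < r ∧ r < ρ ∧ g r = 0})
    (S := {r : ℝ | r ≠ 0 ∧ |r| < ρ ∧ g r = 0}) (fun r hr => hr.1) fun r ⟨hr, hrρ, hgr⟩ =>
      ⟨⟨hr.ne', by rwa [abs_of_pos hr], hgr⟩,
        ⟨neg_ne_zero.mpr hr.ne', by rwa [abs_neg, abs_of_pos hr], by rw [hodd, hgr, neg_zero]⟩⟩
    ).trans hg
  rwa [Nat.cast_mul, Nat.cast_ofNat, ENat.mul_le_mul_left_iff two_ne_zero (by decide)] at hpairs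

theorem exists_encard_zeros_le_of_iteratedDerivFst_ne_zero {E : Type*} [NormedAddCommGroup E]
    [NormedSpace ℝ E] {f : ℝ × E → ℝ} {n : ℕ} (hf : AnalyticAt ℝ f 0)
    (hn : iteratedDerivFst f n 0 ≠ 0) :
    ∃ ρ > 0, ∀ μ : E, ‖μ‖ < ρ → {r ∈ Ioo (-ρ) ρ | f (r, μ) = 0}.encard ≤ n := by
  obtain ⟨ρ, hρ, hball⟩ : ∃ ρ > 0, ∀ p ∈ Metric.ball 0 ρ,
      AnalyticAt ℝ f p ∧ iteratedDerivFst f n p ≠ 0 :=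
    Metric.eventually_nhds_iff_ball.mp
      (hf.eventually_analyticAt.and ((hf.iteratedDerivFst n).continuousAt.eventually_ne hn))
  refine ⟨ρ, hρ, fun μ hμ => ?_⟩
  have hmem : ∀ r ∈ Ioo (-ρ) ρ, (r, μ) ∈ Metric.ball (0 : ℝ × E) ρ := fun r hr => by
    simpa [Prod.norm_def, abs_lt, hμ] using hr
  refine encard_setOf_eq_zero_le_of_iteratedDeriv_ne_zero ordConnected_Ioo isOpen_Ioo
    (AnalyticOnNhd.contDiffOn_of_completeSpace fun r hr => ?_) fun r hr => ?_
  · exact (hball _ (hmem r hr)).1.comp (f := fun s => (s, μ))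
      (analyticAt_id.prod analyticAt_const)
  · rw [iteratedDeriv_eq_iteratedDerivFst (hball _ (hmem r hr)).1]
    exact (hball _ (hmem r hr)).2

/-- If `d` is analytic at the origin with `d(r,0) = δ r^{2l-1} + O(r^{2l})`, `δ ≠ 0`, and
`d(0,μ) = 0`, then for each small parameter `μ` the equation `d(r,μ) = 0` has at most
`2l-2` small nonzero roots; if moreover `d` is odd in `r`, at most `l-1` positive roots. -/
theorem stmt15 (m : ℕ) (d : ℝ × (Fin m → ℝ) → ℝ) (l : ℕ) (δ : ℝ)
    (hl : 1 ≤ l) (hδ : δ ≠ 0)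
    (hd : AnalyticAt ℝ d 0)
    (hexp : (fun r : ℝ => d (r, 0) - δ * r ^ (2 * l - 1)) =O[nhds 0] fun r => r ^ (2 * l))
    (h0 : ∀ μ, d (0, μ) = 0) :
    ∃ ε₀ > (0 : ℝ), ∃ ρ > (0 : ℝ), ∀ μ : Fin m → ℝ, ‖μ‖ < ε₀ →
      ({r : ℝ | r ≠ 0 ∧ |r| < ρ ∧ d (r, μ) = 0}.Finite ∧
        {r : ℝ | r ≠ 0 ∧ |r| < ρ ∧ d (r, μ) = 0}.ncard ≤ 2 * l - 2) ∧
      ((∀ (r' : ℝ) (μ' : Fin m → ℝ), d (-r', μ') = -d (r', μ')) →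
        {r : ℝ | 0 < r ∧ r < ρ ∧ d (r, μ) = 0}.Finite ∧
          {r : ℝ | 0 < r ∧ r < ρ ∧ d (r, μ) = 0}.ncard ≤ l - 1) := by
  set n := 2 * l - 1
  have hslice : AnalyticAt ℝ (fun r : ℝ => d (r, 0)) 0 :=
    hd.comp (f := fun r : ℝ => (r, 0)) (analyticAt_id.prod analyticAt_const)
  have hD0 : iteratedDerivFst d n 0 ≠ 0 := by
    rw [← Prod.mk_zero_zero, ← iteratedDeriv_eq_iteratedDerivFst hd,
      iteratedDeriv_eq_factorial_mul_of_isBigO hslice (by rwa [show n + 1 = 2 * l by omega])]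
    exact mul_ne_zero (by positivity) hδ
  obtain ⟨ρ, hρ, hzeros⟩ := exists_encard_zeros_le_of_iteratedDerivFst_ne_zero hd hD0
  refine ⟨ρ, hρ, ρ, hρ, fun μ hμ => ?_⟩
  have hnonzero : {r : ℝ | r ≠ 0 ∧ |r| < ρ ∧ d (r, μ) = 0}.encard ≤ (2 * l - 2 : ℕ) :=
    encard_setOf_ne_zero_le_of_encard_setOf_le hρ (h0 μ)
      (by rw [show 2 * l - 2 + 1 = n by omega]; exact hzeros μ hμ)
  refine ⟨encard_le_coe_iff_finite_ncard_le.mp hnonzero,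
    fun hodd => encard_le_coe_iff_finite_ncard_le.mp ?_⟩
  exact encard_setOf_pos_le_of_odd (fun r => hodd r μ)
    (by rwa [show 2 * (l - 1) = 2 * l - 2 by omega])
end
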